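/- arXiv:1608.00157 — 2 statements merged into one kernel-verified Lean document; each statement's English description precedes it below -/
import Mathlib

section
/- Let ω = e^{2πi/3} ∈ ℂ and τ = ω + 2. For every natural number k with k ≡ 2 (mod 12) or k ≡ 10 (mod 12), one has |τ^k − 1|² = 1 − 3^{k/2} + 3^k, and for every k with k ≡ 4 (mod 12) or k ≡ 8 (mod 12), one has |τ^k − 1|² = 1 + 3^{k/2} + 3^k. -/
open Complex

/-- The primitive cube root of unity `ω = e^{2πi/3}`. -/
noncomputable def ω : ℂ := Complex.exp (2 * Real.pi * Complex.I / 3)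

/-- `τ = ω + 2`. -/
noncomputable def τ : ℂ := ω + 2

/-! Since `1 + ω + ω² = 0`, we have `τ² = -3ω²`, hence `τ^(2m) = (-3)^m ω^(2m)` and `‖τ‖² = 3`.
When `3 ∤ m`, `ω^(2m)` is again a primitive cube root of unity, so its real part is `-1/2`.
Then `‖z - 1‖² = ‖z‖² - 2 Re z + 1` gives `‖τ^(2m) - 1‖² = 1 + (-3)^m + 3^(2m)`, and the
residue of `k = 2m` modulo `12` fixes both `3 ∤ m` and the parity of `m`, i.e. the sign of `(-3)^m`. -/

open ComplexConjugate

lemma Complex.sq_norm_sub_one (z : ℂ) : ‖z - 1‖ ^ 2 = ‖z‖ ^ 2 - 2 * z.re + 1 := by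
  simp only [Complex.sq_norm, Complex.normSq_sub, map_one, mul_one]
  ring

lemma IsPrimitiveRoot.one_add_add_sq_eq_zero {R : Type*} [CommRing R] [IsDomain R] {ζ : R}
    (hζ : IsPrimitiveRoot ζ 3) : 1 + ζ + ζ ^ 2 = 0 := by
  simpa [Finset.sum_range_succ] using hζ.geom_sum_eq_zero (by norm_num)

lemma IsPrimitiveRoot.re_eq_neg_half {ζ : ℂ} (hζ : IsPrimitiveRoot ζ 3) : ζ.re = -1 / 2 := by
  have hconj : conj ζ = ζ ^ 2 := by
    rw [← Complex.inv_eq_conj (hζ.norm'_eq_one (by norm_num))]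
    exact inv_eq_of_mul_eq_one_right (by rw [← pow_succ', hζ.pow_eq_one])
  have hsum : ζ + conj ζ = -1 := by
    rw [hconj]
    linear_combination hζ.one_add_add_sq_eq_zero
  have hre := congrArg Complex.re hsum
  simp only [add_re, conj_re, neg_re, one_re] at hre
  linarith

lemma isPrimitiveRoot_omega : IsPrimitiveRoot ω 3 := by
  simpa [ω] using Complex.isPrimitiveRoot_exp 3 (by norm_num)

lemma tau_sq : τ ^ 2 = -3 * ω ^ 2 := by
  rw [τ]
  linear_combination 4 * isPrimitiveRoot_omega.one_add_add_sq_eq_zero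

lemma norm_tau_sq : ‖τ‖ ^ 2 = 3 := by
  rw [← norm_pow, tau_sq, norm_mul, norm_pow, isPrimitiveRoot_omega.norm'_eq_one (by norm_num)]
  norm_num

lemma re_tau_pow_two_mul {m : ℕ} (hm : ¬ 3 ∣ m) : (τ ^ (2 * m)).re = -(-3) ^ m / 2 := by
  have hcop : (2 * m).Coprime 3 :=
    ((Nat.Prime.coprime_iff_not_dvd Nat.prime_three).2 (by omega)).symm
  rw [pow_mul, tau_sq, mul_pow, ← pow_mul, ← ofReal_ofNat, ← ofReal_neg, ← ofReal_pow,
    re_ofReal_mul, (isPrimitiveRoot_omega.pow_of_coprime _ hcop).re_eq_neg_half]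
  ring

lemma norm_tau_pow_two_mul_sub_one_sq {m : ℕ} (hm : ¬ 3 ∣ m) :
    ‖τ ^ (2 * m) - 1‖ ^ 2 = 1 + (-3) ^ m + 3 ^ (2 * m) := by
  rw [Complex.sq_norm_sub_one, re_tau_pow_two_mul hm, norm_pow, ← pow_mul, mul_comm, pow_mul,
    norm_tau_sq]
  ring

/-- For `k ≡ 2, 10 (mod 12)`, `|τ^k − 1|² = 1 − 3^{k/2} + 3^k`;
for `k ≡ 4, 8 (mod 12)`, `|τ^k − 1|² = 1 + 3^{k/2} + 3^k`. -/
theorem normSq_tau_pow_sub_one_of_even_cases :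
    (∀ k : ℕ, k % 12 = 2 ∨ k % 12 = 10 →
      ‖τ ^ k - 1‖ ^ 2 = 1 - (3 : ℝ) ^ (k / 2) + (3 : ℝ) ^ k) ∧
    (∀ k : ℕ, k % 12 = 4 ∨ k % 12 = 8 →
      ‖τ ^ k - 1‖ ^ 2 = 1 + (3 : ℝ) ^ (k / 2) + (3 : ℝ) ^ k) := by
  constructor
  all_goals
    intro k hk
    obtain ⟨m, rfl⟩ : ∃ m, k = 2 * m := ⟨k / 2, by omega⟩
    rw [norm_tau_pow_two_mul_sub_one_sq (by omega), Nat.mul_div_cancel_left m two_pos]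
  · rw [Odd.neg_pow ⟨m / 2, by omega⟩]
    ring
  · rw [Even.neg_pow ⟨m / 2, by omega⟩]
end

section
/- Let ω = e^{2πi/3} ∈ ℂ, τ = ω + 2, and for k ≡ 1 (mod 12) with k > 1 let M_k = (τ^k − 1)/(τ − 1) ∈ ℂ. Then Re(M_k) = (−1 + 3^{(k+1)/2})/2 and Im(M_k) = (√3 − 3^{k/2})/2; consequently Re(M_k) > 0, Im(M_k) < 0, and the argument of M_k lies in the interval [−π/3, 0) (i.e., M_k lies in the sixth sextant of the plane). -/
open Complex

/-- The `τ`-Mersenne number `M_k = (τ^k − 1)/(τ − 1)` as a complex number. -/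
noncomputable def M (k : ℕ) : ℂ := (τ ^ k - 1) / (τ - 1)

/-!
Since `τ = (3 + √3 i)/2` satisfies `τ² = 3τ - 3`, we get `τ⁶ = -27` and `τ¹² = 3⁶`, so for
`k = 12m + 1` we have `τ^k = 3^{6m} τ`.  As `τ + τ̄ = 3` and `|τ|² = 3`, this gives
`M_k = 1 + (3^{6m} - 1) τ̄`, whose coordinates are the claimed ones.  For `m ≥ 1` the point
lies on the open ray from `1` in the direction `τ̄ = √3 e^{-iπ/6}`, hence in the sixth sextant.
-/

open ComplexConjugate

theorem neg_pi_div_three_le_arg_of_re_pos {z : ℂ} (hre : 0 < z.re)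
    (him : -(Real.sqrt 3 * z.re) ≤ z.im) : -(Real.pi / 3) ≤ z.arg := by
  have hbound : |z.arg| < Real.pi / 2 := abs_arg_lt_pi_div_two_iff.2 (Or.inl hre)
  have harg : z.arg = Real.arctan (z.im / z.re) := by
    rw [← tan_arg, Real.arctan_tan (abs_lt.1 hbound).1 (abs_lt.1 hbound).2]
  rw [harg, ← Real.arctan_sqrt_three, ← Real.arctan_neg]
  exact Real.arctan_strictMono.monotone <| (le_div_iff₀ hre).2 (by linarith)

theorem ω_eq : ω = -(1 / 2) + (Real.sqrt 3 / 2 : ℝ) * I := by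
  have harg : 2 * Real.pi * I / 3 = ((Real.pi - Real.pi / 3 : ℝ) : ℂ) * I := by
    push_cast; ring
  rw [ω, harg, exp_mul_I, ← ofReal_cos, ← ofReal_sin, Real.cos_pi_sub, Real.sin_pi_sub,
    Real.cos_pi_div_three, Real.sin_pi_div_three]
  push_cast; ring

theorem τ_eq : τ = 3 / 2 + (Real.sqrt 3 / 2 : ℝ) * I := by
  rw [τ, ω_eq]; ring

theorem τ_sq : τ ^ 2 = 3 * τ - 3 := by
  have h3 : ((Real.sqrt 3 : ℝ) : ℂ) ^ 2 = 3 := by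
    rw [← ofReal_pow, Real.sq_sqrt (by norm_num)]; norm_num
  rw [τ_eq]
  push_cast
  linear_combination (I ^ 2 / 4) * h3 + (3 / 4) * I_sq

theorem τ_pow_six : τ ^ 6 = -27 := by
  linear_combination (τ ^ 4 + 3 * τ ^ 3 + 6 * τ ^ 2 + 9 * τ + 9) * τ_sq

theorem τ_pow_twelve_mul_add_one (m : ℕ) : τ ^ (12 * m + 1) = ↑((3 : ℝ) ^ (6 * m)) * τ := by
  rw [pow_succ, pow_mul, show τ ^ 12 = 3 ^ 6 by linear_combination (τ ^ 6 - 27) * τ_pow_six]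
  push_cast
  rw [pow_mul]

theorem conj_τ : conj τ = 3 - τ := by
  rw [τ_eq]
  simp only [map_add, map_mul, conj_ofReal, conj_I, map_div₀, map_ofNat]
  ring

theorem τ_ne_one : τ ≠ 1 := by
  intro h
  have := τ_sq
  rw [h] at this
  norm_num at this

theorem M_eq_of_τ_pow_eq {k : ℕ} {c : ℝ} (h : τ ^ k = c * τ) : M k = 1 + (c - 1) * conj τ := by
  rw [M, h, div_eq_iff (sub_ne_zero.2 τ_ne_one), conj_τ]
  linear_combination ((c : ℂ) - 1) * τ_sq

theorem M_twelve_mul_add_one (m : ℕ) :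
    M (12 * m + 1) =
      ⟨(-1 + 3 * (3 : ℝ) ^ (6 * m)) / 2, (Real.sqrt 3 - (3 : ℝ) ^ (6 * m) * Real.sqrt 3) / 2⟩ := by
  rw [mk_eq_add_mul_I, M_eq_of_τ_pow_eq (τ_pow_twelve_mul_add_one m), conj_τ, τ_eq]
  push_cast
  ring

theorem M_twelve_mul_add_one_re (m : ℕ) :
    (M (12 * m + 1)).re = (-1 + 3 * (3 : ℝ) ^ (6 * m)) / 2 := by
  rw [M_twelve_mul_add_one]

theorem M_twelve_mul_add_one_im (m : ℕ) :
    (M (12 * m + 1)).im = (Real.sqrt 3 - (3 : ℝ) ^ (6 * m) * Real.sqrt 3) / 2 := by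
  rw [M_twelve_mul_add_one]

theorem Real.rpow_odd_div_two {x : ℝ} (hx : 0 ≤ x) (n : ℕ) :
    x ^ ((2 * n + 1 : ℝ) / 2) = x ^ n * Real.sqrt x := by
  rw [add_div, mul_div_cancel_left₀ _ two_ne_zero, Real.rpow_add' hx (by positivity),
    Real.rpow_natCast, Real.sqrt_eq_rpow, one_div]

/-- For `k ≡ 1 (mod 12)` with `k > 1`:
`Re M_k = (−1 + 3^{(k+1)/2})/2`, `Im M_k = (√3 − 3^{k/2})/2`, so `Re M_k > 0`,
`Im M_k < 0`, and `Arg M_k ∈ [−π/3, 0)` (`M_k` lies in the sixth sextant). -/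
theorem mersenne_sixth_sextant (k : ℕ) (hmod : k % 12 = 1) (hk : 1 < k) :
    (M k).re = (-1 + (3 : ℝ) ^ (((k : ℝ) + 1) / 2)) / 2 ∧
    (M k).im = (Real.sqrt 3 - (3 : ℝ) ^ ((k : ℝ) / 2)) / 2 ∧
    0 < (M k).re ∧ (M k).im < 0 ∧
    -(Real.pi / 3) ≤ (M k).arg ∧ (M k).arg < 0 := by
  obtain ⟨m, rfl⟩ : ∃ m, k = 12 * m + 1 := ⟨k / 12, by omega⟩
  have hc : 1 < (3 : ℝ) ^ (6 * m) := one_lt_pow₀ (by norm_num) (by omega)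
  have hsqrt3 : 0 < Real.sqrt 3 := Real.sqrt_pos.2 three_pos
  have hre_exp : (3 : ℝ) ^ ((((12 * m + 1 : ℕ) : ℝ) + 1) / 2) = 3 * 3 ^ (6 * m) := by
    rw [show (((12 * m + 1 : ℕ) : ℝ) + 1) / 2 = ((6 * m + 1 : ℕ) : ℝ) by push_cast; ring,
      Real.rpow_natCast, pow_succ']
  have him_exp : (3 : ℝ) ^ (((12 * m + 1 : ℕ) : ℝ) / 2) = 3 ^ (6 * m) * Real.sqrt 3 := by
    rw [show ((12 * m + 1 : ℕ) : ℝ) / 2 = (2 * ((6 * m : ℕ) : ℝ) + 1) / 2 by push_cast; ring,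
      Real.rpow_odd_div_two (by norm_num)]
  have hre := M_twelve_mul_add_one_re m
  have him := M_twelve_mul_add_one_im m
  have hre_pos : 0 < (M (12 * m + 1)).re := by rw [hre]; linarith
  have him_neg : (M (12 * m + 1)).im < 0 := by rw [him]; nlinarith
  refine ⟨by rw [hre, hre_exp], by rw [him, him_exp], hre_pos, him_neg, ?_,
    arg_neg_iff.2 him_neg⟩
  exact neg_pi_div_three_le_arg_of_re_pos hre_pos (by rw [hre, him]; nlinarith)
end
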